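/- Let I ⊆ ℂ[x₀,…,x_n] be a saturated homogeneous ideal generated by forms of degrees d₁ < ⋯ < d_s, and let f: X = Bl₀(ℂ^{n+1}) → ℂ^{n+1} be the blowup of the origin with exceptional divisor E. With 𝓟_j = 𝓘'_{d_j} + O_X((d₁−d_{j+1})E) for 1 ≤ j ≤ s−1 and 𝓘' the ideal of the strict transform of the cone over Z, one has I·O_X = O_X(−d₁E)·(𝓟₁ ∩ ⋯ ∩ 𝓟_{s−1} ∩ 𝓘'). -/

import Mathlib

open MvPolynomial

noncomputable section

/-- The irrelevant ideal `(x₀,…,x_n)` of `ℂ[x₀,…,x_n]`. -/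
def irrN (n : ℕ) : Ideal (MvPolynomial (Fin (n + 1)) ℂ) :=
  Ideal.span (Set.range (X : Fin (n + 1) → MvPolynomial (Fin (n + 1)) ℂ))

/-- Saturation of a homogeneous ideal with respect to the irrelevant ideal. -/
def satN (n : ℕ) (J : Ideal (MvPolynomial (Fin (n + 1)) ℂ)) :
    Ideal (MvPolynomial (Fin (n + 1)) ℂ) :=
  ⨆ N : ℕ, J.colon ((irrN n ^ N : Ideal (MvPolynomial (Fin (n + 1)) ℂ)) : Set (MvPolynomial (Fin (n + 1)) ℂ))

/-- The ideal generated by the degree-`d` piece `I_d` of `I`. -/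
def pieceSpanN (n : ℕ) (I : Ideal (MvPolynomial (Fin (n + 1)) ℂ)) (d : ℕ) :
    Ideal (MvPolynomial (Fin (n + 1)) ℂ) :=
  Ideal.span {f | f ∈ I ∧ f.IsHomogeneous d}

/-- `d` is a geometric generating degree of `I`: the `d`-envelope differs from the
`(d-1)`-envelope, i.e. the saturations of the ideals generated by `I_d` and `I_{d-1}`
differ. -/
def IsGGDN (n : ℕ) (I : Ideal (MvPolynomial (Fin (n + 1)) ℂ)) (d : ℕ) : Prop :=
  satN n (pieceSpanN n I d) ≠ satN n (pieceSpanN n I (d - 1))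

/-- The zero locus in `ℙⁿ` of a set of (homogeneous) polynomials. -/
def projZeroLocusN (n : ℕ) (T : Set (MvPolynomial (Fin (n + 1)) ℂ)) :
    Set (Projectivization ℂ (Fin (n + 1) → ℂ)) :=
  {p | ∀ f ∈ T, eval p.rep f = 0}

end

noncomputable section

/-- The `m`-th standard coordinate chart of the blowup `Bl₀(ℂ^{n+1})`, as a
ring map on coordinate rings: `x_m ↦ z_m`, `x_i ↦ z_m z_i` for `i ≠ m`.  The
exceptional divisor `E` is cut out by `z_m` in this chart. -/
def blowChart (n : ℕ) (m : Fin (n + 1)) :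
    MvPolynomial (Fin (n + 1)) ℂ →+* MvPolynomial (Fin (n + 1)) ℂ :=
  (aeval fun i : Fin (n + 1) =>
    if i = m then (X m : MvPolynomial (Fin (n + 1)) ℂ) else X m * X i).toRingHom

/-- In the chart, `I'_d` is the ideal generated by the dehomogenizations
`H(…,1,…)` (setting `x_m = 1`) of the degree-`d` elements `H` of `I`. -/
def chartDehom (n : ℕ) (m : Fin (n + 1))
    (I : Ideal (MvPolynomial (Fin (n + 1)) ℂ)) (d : ℕ) :
    Ideal (MvPolynomial (Fin (n + 1)) ℂ) :=
  Ideal.span ((fun f => aeval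
      (fun i : Fin (n + 1) =>
        if i = m then (1 : MvPolynomial (Fin (n + 1)) ℂ) else X i) f) ''
    {f | f ∈ I ∧ f.IsHomogeneous d})

/-! On the chart a form of degree `d` pulls back to `z^d` times its dehomogenization, so
`I·O_X = ∑ z^{d_i} I'_{d_i}`. After factoring out `z^{d_1}`, the claim reads
`∑ z^{e_i} I'_{d_i} = ⋂_{j<s} (A_j + (z^{e_{j+1}})) ∩ A_s` with increasing exponents
`e_i = d_i - d_1` and `A_k = I'_{d_1} + ⋯ + I'_{d_k}`. Each `A_k` is generated by polynomials
free of `z`, so `z` is a nonzerodivisor modulo `A_k`. The inclusion `⊆` holds termwise. For `⊇`,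
induct on `s`: write `x = a + z^{e_s} c` with `a ∈ A_{s-1}`; regularity of `z` modulo `A_s` gives
`c ∈ A_s`, hence `z^{e_s} c ∈ z^{e_s} A_s ⊆ ∑ z^{e_i} I'_{d_i}`, while `a` lies in the
intersection for `s - 1`. -/

namespace Ideal

open Finset

variable {R : Type*} [CommRing R]

theorem span_pow_mul_le_span_pow_mul (z : R) (Q : Ideal R) {a b : ℕ} (hab : a ≤ b) :
    span {z ^ b} * Q ≤ span {z ^ a} * Q :=
  mul_mono_left (span_singleton_le_span_singleton.mpr (pow_dvd_pow z hab))

variable (z : R) (Q : ℕ → Ideal R) {e : ℕ → ℕ} {s : ℕ}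

theorem sum_span_pow_mul_le_inf (he : MonotoneOn e (Set.Iio s)) :
    ∑ i ∈ range s, span {z ^ e i} * Q i ≤
      (range s).inf (fun j => (∑ i ∈ range j, Q i) + span {z ^ e j}) ⊓
        ∑ i ∈ range s, Q i := by
  rw [sum_eq_sup]
  refine Finset.sup_le fun i hi => le_inf (Finset.le_inf fun j hj => ?_) ?_
  · rcases lt_or_ge i j with hij | hji
    · calc span {z ^ e i} * Q i ≤ Q i := mul_le_right
        _ ≤ ∑ k ∈ range j, Q k := by
          rw [sum_eq_sup]; exact Finset.le_sup (mem_range.mpr hij)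
        _ ≤ _ := le_sup_left
    · calc span {z ^ e i} * Q i ≤ span {z ^ e i} := mul_le_left
        _ ≤ span {z ^ e j} := span_singleton_le_span_singleton.mpr <|
          pow_dvd_pow z (he (mem_range.mp hj) (mem_range.mp hi) hji)
        _ ≤ _ := le_sup_right
  · rw [sum_eq_sup]
    exact mul_le_right.trans (Finset.le_sup (f := Q) hi)

theorem inf_le_sum_span_pow_mul (he : MonotoneOn e (Set.Iio s))
    (hreg : ∀ k ∈ Icc 1 s, IsSMulRegular (R ⧸ ∑ i ∈ range k, Q i) z) :
    (range s).inf (fun j => (∑ i ∈ range j, Q i) + span {z ^ e j}) ⊓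
        ∑ i ∈ range s, Q i ≤ ∑ i ∈ range s, span {z ^ e i} * Q i := by
  induction s with
  | zero => simp
  | succ s ih =>
    intro x hx
    obtain ⟨hxP, hxA⟩ := Submodule.mem_inf.mp hx
    rw [Submodule.mem_finsetInf] at hxP
    obtain ⟨a, ha, c, hc, rfl⟩ := Submodule.mem_sup.mp (hxP s (self_mem_range_succ s))
    obtain ⟨b, rfl⟩ := mem_span_singleton'.mp hc
    have he_le : ∀ j ∈ range (s + 1), e j ≤ e s := fun j hj =>
      he (mem_range.mp hj) (lt_add_one s) (Nat.lt_succ_iff.mp (mem_range.mp hj))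
    have hA : ∑ i ∈ range s, Q i ≤ ∑ i ∈ range (s + 1), Q i :=
      sum_le_sum_of_subset (range_subset_range.mpr (Nat.le_succ s))
    have hb : b ∈ ∑ i ∈ range (s + 1), Q i := by
      refine mem_of_isSMulRegular_quotient_of_smul_mem
        ((hreg (s + 1) (by simp)).pow (e s)) ?_
      rw [smul_eq_mul, mul_comm, ← add_sub_cancel_left a (b * z ^ e s)]
      exact sub_mem hxA (hA ha)
    have hbB : b * z ^ e s ∈ ∑ i ∈ range (s + 1), span {z ^ e i} * Q i := by
      refine sum_le_sum (f := fun i => span {z ^ e s} * Q i)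
        (fun i hi => span_pow_mul_le_span_pow_mul z (Q i) (he_le i hi)) ?_
      rw [← Finset.mul_sum, mul_comm b]
      exact mul_mem_mul (mem_span_singleton_self _) hb
    have haP : a ∈ (range s).inf (fun j => (∑ i ∈ range j, Q i) + span {z ^ e j}) := by
      refine Submodule.mem_finsetInf.mpr fun j hj => ?_
      have hj' : j ∈ range (s + 1) := mem_range.mpr (Nat.lt_succ_of_lt (mem_range.mp hj))
      rw [← add_sub_cancel_right a (b * z ^ e s)]
      refine sub_mem (hxP j hj') (Submodule.mem_sup_right (mem_span_singleton.mpr ?_))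
      exact (pow_dvd_pow z (he_le j hj')).mul_left b
    have haB := ih (he.mono (Set.Iio_subset_Iio (Nat.le_succ s)))
      (fun k hk => hreg k (Icc_subset_Icc_right (Nat.le_succ s) hk))
      (Submodule.mem_inf.mpr ⟨haP, ha⟩)
    exact add_mem (sum_le_sum_of_subset (f := fun i => span {z ^ e i} * Q i)
      (range_subset_range.mpr (Nat.le_succ s)) haB) hbB

theorem sum_span_pow_mul_eq_inf_Ico (he0 : e 0 = 0) (he : MonotoneOn e (Set.Iio s))
    (hreg : ∀ k ∈ Icc 1 s, IsSMulRegular (R ⧸ ∑ i ∈ range k, Q i) z) :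
    ∑ i ∈ range s, span {z ^ e i} * Q i =
      (Ico 1 s).inf (fun j => (∑ i ∈ range j, Q i) + span {z ^ e j}) ⊓
        ∑ i ∈ range s, Q i := by
  rw [le_antisymm (sum_span_pow_mul_le_inf z Q he) (inf_le_sum_span_pow_mul z Q he hreg)]
  congr 1
  rcases s.eq_zero_or_pos with rfl | hs
  · rfl
  rw [range_eq_Ico, ← Finset.insert_Ico_add_one_left_eq_Ico hs, inf_insert, he0, pow_zero,
    span_singleton_one, Submodule.add_eq_sup, sup_top_eq, top_inf_eq, zero_add]

end Ideal

namespace MvPolynomial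

theorem IsHomogeneous.aeval_const_mul {R S σ : Type*} [CommSemiring R] [CommSemiring S]
    [Algebra R S] {f : MvPolynomial σ R} {d : ℕ} (hf : f.IsHomogeneous d) (c : S) (g : σ → S) :
    MvPolynomial.aeval (fun i => c * g i) f = c ^ d * MvPolynomial.aeval g f := by
  simp only [aeval_def, eval₂_eq, Finset.mul_sum]
  refine Finset.sum_congr rfl fun α hα => ?_
  simp only [mul_pow, Finset.prod_mul_distrib, Finset.prod_pow_eq_pow_sum,
    ← hf.degree_eq_sum_deg_support hα]
  ring

end MvPolynomial

theorem Polynomial.mem_map_C_of_X_mul_mem {R : Type*} [CommRing R] {I : Ideal R}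
    {f : Polynomial R} (h : Polynomial.X * f ∈ I.map Polynomial.C) : f ∈ I.map Polynomial.C :=
  Ideal.mem_map_C_iff.mpr fun k => by
    simpa only [Polynomial.coeff_X_mul] using Ideal.mem_map_C_iff.mp h (k + 1)

namespace MvPolynomial

variable {R σ : Type*} [CommRing R] [DecidableEq σ]

theorem isSMulRegular_X_quotient_map_rename (m : σ) (J : Ideal (MvPolynomial {i // i ≠ m} R)) :
    IsSMulRegular (MvPolynomial σ R ⧸ J.map (rename (R := R) Subtype.val))
      (X m : MvPolynomial σ R) := by
  set φ := ((renameEquiv R (Equiv.optionSubtypeNe m).symm).trans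
    (optionEquivLeft R {i // i ≠ m})).toRingEquiv
  have hX : φ (X m) = Polynomial.X := by
    simp [φ, optionEquivLeft_X_none]
  have hC : (φ : MvPolynomial σ R →+* Polynomial (MvPolynomial {i // i ≠ m} R)).comp
      (rename Subtype.val).toRingHom = Polynomial.C := by
    refine ringHom_ext (fun r => ?_) (fun i => ?_)
    · simp [φ, optionEquivLeft_C]
    · simp [φ, optionEquivLeft_X_some, Equiv.optionSubtypeNe_symm_of_ne i.2]
  have hJ : (J.map (rename Subtype.val)).map φ = J.map Polynomial.C := by
    rw [← hC, ← Ideal.map_map]; rfl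
  refine (isSMulRegular_quotient_iff_mem_of_smul_mem _ _).mpr fun p hp => ?_
  rw [smul_eq_mul, ← Ideal.apply_mem_of_equiv_iff (f := φ), map_mul, hX, hJ] at hp
  rw [← Ideal.apply_mem_of_equiv_iff (f := φ), hJ]
  exact Polynomial.mem_map_C_of_X_mul_mem hp

end MvPolynomial

open MvPolynomial

section Chart

variable {n : ℕ} (m : Fin (n + 1))

theorem blowChart_of_isHomogeneous {f : MvPolynomial (Fin (n + 1)) ℂ} {d : ℕ}
    (hf : f.IsHomogeneous d) :
    blowChart n m f = X m ^ d * aeval (fun i => if i = m then 1 else X i) f := by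
  have hvar : (fun i => if i = m then X m else X m * X i) =
      fun i => (X m : MvPolynomial (Fin (n + 1)) ℂ) * if i = m then 1 else X i := by
    funext i
    split_ifs <;> simp
  rw [← hf.aeval_const_mul, ← hvar]
  rfl

theorem map_blowChart_pieceSpanN (I : Ideal (MvPolynomial (Fin (n + 1)) ℂ)) (d : ℕ) :
    (pieceSpanN n I d).map (blowChart n m) = Ideal.span {X m ^ d} * chartDehom n m I d := by
  rw [pieceSpanN, chartDehom, Ideal.map_span, Ideal.span_mul_span', Set.singleton_mul,
    Set.image_image]
  exact congrArg _ (Set.image_congr fun f hf => blowChart_of_isHomogeneous m hf.2)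

theorem aeval_dehom_eq_rename :
    aeval (fun i : Fin (n + 1) => if i = m then (1 : MvPolynomial (Fin (n + 1)) ℂ) else X i) =
      (rename Subtype.val).comp
        (aeval fun i => if h : i = m then 1 else X (⟨i, h⟩ : {i // i ≠ m})) := by
  refine algHom_ext fun i => ?_
  by_cases h : i = m <;> simp [h]

theorem isSMulRegular_X_quotient_sum_chartDehom (I : Ideal (MvPolynomial (Fin (n + 1)) ℂ))
    (t : Finset ℕ) (d : ℕ → ℕ) :
    IsSMulRegular (MvPolynomial (Fin (n + 1)) ℂ ⧸ ∑ i ∈ t, chartDehom n m I (d i))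
      (X m : MvPolynomial (Fin (n + 1)) ℂ) := by
  have hsum : ∑ i ∈ t, chartDehom n m I (d i) = (∑ i ∈ t, Ideal.span
      ((aeval fun i => if h : i = m then 1 else X (⟨i, h⟩ : {i // i ≠ m})) ''
        {f | f ∈ I ∧ f.IsHomogeneous (d i)})).map (rename Subtype.val) := by
    simp_rw [chartDehom, aeval_dehom_eq_rename, AlgHom.coe_comp, Set.image_comp, ← Ideal.map_span,
      ← Ideal.mapHom_apply, ← map_sum]
  rw [hsum]
  exact isSMulRegular_X_quotient_map_rename m _

end Chart

theorem blowup_pullback_decomposition_general (n s : ℕ)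
    (I : Ideal (MvPolynomial (Fin (n + 1)) ℂ))
    (dd : ℕ → ℕ) (hmono : ∀ i j, i < j → j < s → dd i < dd j)
    (hgen : I = ∑ i ∈ Finset.range s, pieceSpanN n I (dd i))
    (m : Fin (n + 1)) :
    Ideal.map (blowChart n m) I
      = Ideal.span {X m ^ dd 0} *
          (((Finset.Ico 1 s).inf fun j =>
              (∑ i ∈ Finset.range j, chartDehom n m I (dd i))
                + Ideal.span {X m ^ (dd j - dd 0)})
            ⊓ ∑ i ∈ Finset.range s, chartDehom n m I (dd i)) := by
  have hdd : MonotoneOn dd (Set.Iio s) :=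
    (show StrictMonoOn dd (Set.Iio s) from fun i _ j hj hij => hmono i j hij hj).monotoneOn
  have hshift : MonotoneOn (fun i => dd i - dd 0) (Set.Iio s) := fun i hi j hj hij =>
    Nat.sub_le_sub_right (hdd hi hj hij) _
  calc Ideal.map (blowChart n m) I
      = ∑ i ∈ Finset.range s, Ideal.span {X m ^ dd i} * chartDehom n m I (dd i) := by
        conv_lhs => rw [hgen]
        rw [← Ideal.mapHom_apply, map_sum]
        exact Finset.sum_congr rfl fun i _ => map_blowChart_pieceSpanN m I (dd i)
    _ = Ideal.span {X m ^ dd 0} * ∑ i ∈ Finset.range s,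
          Ideal.span {X m ^ (dd i - dd 0)} * chartDehom n m I (dd i) := by
        rw [Finset.mul_sum]
        refine Finset.sum_congr rfl fun i hi => ?_
        have h0i : dd 0 ≤ dd i := hdd (Nat.zero_lt_of_lt (Finset.mem_range.mp hi))
          (Finset.mem_range.mp hi) (Nat.zero_le i)
        rw [← mul_assoc, Ideal.span_singleton_mul_span_singleton, ← pow_add,
          Nat.add_sub_cancel' h0i]
    _ = _ := by
        rw [Ideal.sum_span_pow_mul_eq_inf_Ico _ _ (Nat.sub_self (dd 0)) hshift
          fun k _ => isSMulRegular_X_quotient_sum_chartDehom m I _ dd]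

/-- **Decomposition of the pullback ideal on the blowup of the origin,**
verified on each standard chart.  Let `I ⊆ ℂ[x₀,…,x_n]` be a saturated
homogeneous ideal generated by forms of degrees `d₁ < ⋯ < d_s`.  On the chart
the identity `I·O_X = O_X(−d₁E)·(𝓟₁ ∩ ⋯ ∩ 𝓟_{s−1} ∩ 𝓘')` reads:
`z^{d₁}I'_{d₁} + ⋯ + z^{d_s}I'_{d_s}
  = z^{d₁}·( ⋂_{1≤j≤s−1} (I'_{d₁}+⋯+I'_{d_j}+(z^{d_{j+1}−d₁}))
      ∩ (I'_{d₁}+⋯+I'_{d_s}) )`. -/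
theorem blowup_pullback_decomposition (n s : ℕ) (hs : 0 < s)
    (I : Ideal (MvPolynomial (Fin (n + 1)) ℂ))
    (hIh : I = Ideal.span {f | f ∈ I ∧ ∃ k, f.IsHomogeneous k})
    (hsat : satN n I = I)
    (dd : ℕ → ℕ) (hmono : ∀ i j, i < j → j < s → dd i < dd j)
    (hgen : I = ∑ i ∈ Finset.range s, pieceSpanN n I (dd i))
    (m : Fin (n + 1)) :
    Ideal.map (blowChart n m) I
      = Ideal.span {X m ^ dd 0} *
          (((Finset.Ico 1 s).inf fun j =>
              (∑ i ∈ Finset.range j, chartDehom n m I (dd i))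
                + Ideal.span {X m ^ (dd j - dd 0)})
            ⊓ ∑ i ∈ Finset.range s, chartDehom n m I (dd i)) :=
  blowup_pullback_decomposition_general n s I dd hmono hgen m
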